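/- Define on the free ℂ-module with basis {B^n_k : n,k ∈ ℕ} the bilinear bracket determined by [B^n_k, B^N_K] = (kN − Kn) B^{n+N−1}_{k+K−1} (where indices of the resulting generator stay in ℕ, noting n+N−1 ≥ 0 and k+K−1 ≥ 0 whenever the coefficient kN−Kn is nonzero). Then this bracket is alternating and satisfies the Jacobi identity, so it defines a Lie algebra structure (the RHPWN Lie algebra with trivial test function algebra). -/

import Mathlib

/-- The RHPWN bracket on the free ℂ-module with basis `{B^n_k : (n,k) ∈ ℕ × ℕ}`,
determined bilinearly by `[B^n_k, B^N_K] = (kN − Kn) B^{n+N−1}_{k+K−1}`. -/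
noncomputable def rhpwnBracket (x y : (ℕ × ℕ) →₀ ℂ) : (ℕ × ℕ) →₀ ℂ :=
  x.sum fun a ca => y.sum fun b cb =>
    (ca * cb * ((a.2 * b.1 - b.2 * a.1 : ℤ) : ℂ)) •
      Finsupp.single (a.1 + b.1 - 1, a.2 + b.2 - 1) (1 : ℂ)

/-!
The only obstruction to a direct computation is the truncated subtraction in the index
`(n + N - 1, k + K - 1)`. Sending `B^n_k` to the basis vector `e_(n,k)` of the free module on
`ℤ × ℤ`, with bracket `[e_a, e_b] = ω(a, b) e_(a + b - (1, 1))` where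
`ω((n, k), (N, K)) = kN − Kn`, is injective and respects the brackets, because the
truncation only happens when `ω(a, b) = 0`. On `ℤ × ℤ` both identities reduce, on basis
vectors, to polynomial identities in the coordinates.
-/

namespace LinearMap

variable {ι R M N : Type*} [CommRing R] [AddCommGroup M] [Module R M] [AddCommGroup N]
  [Module R N]

theorem isAlt_of_basis (b : Module.Basis ι R M) {B : M →ₗ[R] M →ₗ[R] N}
    (h_self : ∀ i, B (b i) (b i) = 0) (h_anti : ∀ i j, B (b i) (b j) = -B (b j) (b i)) :
    B.IsAlt := by
  have h_flip : B + B.flip = 0 := ext_basis b b fun i j => by simp [h_anti i j]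
  intro x
  induction b.mem_span x using Submodule.span_induction with
  | mem _ h =>
    obtain ⟨i, rfl⟩ := h
    exact h_self i
  | zero => simp
  | add x y _ _ hx hy =>
    have hxy : B x y + B y x = 0 := congr_fun₂ h_flip x y
    simp only [map_add, add_apply, hx, hy]
    linear_combination (norm := abel) hxy
  | smul c x _ hx => simp [hx]

theorem jacobi_of_basis (b : Module.Basis ι R M) {B : M →ₗ[R] M →ₗ[R] M}
    (h : ∀ i j k, B (b i) (B (b j) (b k)) + B (b j) (B (b k) (b i)) + B (b k) (B (b i) (b j)) = 0)
    (x y z : M) : B x (B y z) + B y (B z x) + B z (B x y) = 0 := by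
  have of_basis : ∀ y z, (∀ i, B (b i) (B y z) + B y (B z (b i)) + B z (B (b i) y) = 0) →
      ∀ x, B x (B y z) + B y (B z x) + B z (B x y) = 0 := by
    intro y z hi x
    have : B.flip (B y z) + B y ∘ₗ B z + B z ∘ₗ B.flip y = 0 :=
      b.ext fun i => by simpa using hi i
    simpa using congr($this x)
  have cyclic : ∀ x y z : M, B x (B y z) + B y (B z x) + B z (B x y) =
      B y (B z x) + B z (B x y) + B x (B y z) := fun _ _ _ => by abel
  refine of_basis y z (fun i => ?_) x
  rw [cyclic]
  refine of_basis z (b i) (fun j => ?_) y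
  rw [cyclic]
  refine of_basis (b i) (b j) (fun k => ?_) z
  rw [cyclic]
  exact h i j k

end LinearMap

namespace Finsupp

variable (R : Type*) {α M : Type*} [CommSemiring R] [AddCommMonoid M] [Module R M]

noncomputable def linearCombination₂ (f : α → α → M) : (α →₀ R) →ₗ[R] (α →₀ R) →ₗ[R] M :=
  linearCombination R fun a => linearCombination R (f a)

variable {R}

theorem linearCombination₂_apply (f : α → α → M) (x y : α →₀ R) :
    linearCombination₂ R f x y = x.sum fun a c => y.sum fun b d => (c * d) • f a b := by
  simp only [linearCombination₂, linearCombination_apply, LinearMap.finsupp_sum_apply,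
    LinearMap.smul_apply, Finsupp.smul_sum, smul_smul]

theorem linearCombination₂_single_one (f : α → α → M) (a b : α) :
    linearCombination₂ R f (single a 1) (single b 1) = f a b := by
  simp [linearCombination₂]

end Finsupp

namespace RHPWN

open Finsupp

def structConst (a b : ℤ × ℤ) : ℤ := a.2 * b.1 - b.2 * a.1

theorem structConst_self (a : ℤ × ℤ) : structConst a a = 0 := by
  simp only [structConst]; ring

theorem structConst_comm (a b : ℤ × ℤ) : structConst a b = -structConst b a := by
  simp only [structConst]; ring

theorem structConst_jacobi (a b c : ℤ × ℤ) :
    structConst b c * structConst a (b + c - (1, 1)) +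
      structConst c a * structConst b (c + a - (1, 1)) +
        structConst a b * structConst c (a + b - (1, 1)) = 0 := by
  simp only [structConst, Prod.fst_add, Prod.snd_add, Prod.fst_sub, Prod.snd_sub]; ring

variable {R : Type*} [CommRing R]

variable (R) in
noncomputable def intBracket : ((ℤ × ℤ) →₀ R) →ₗ[R] ((ℤ × ℤ) →₀ R) →ₗ[R] ((ℤ × ℤ) →₀ R) :=
  linearCombination₂ R fun a b => (structConst a b : R) • single (a + b - (1, 1)) 1

theorem intBracket_single_one (a b : ℤ × ℤ) :
    intBracket R (single a 1) (single b 1) = (structConst a b : R) • single (a + b - (1, 1)) 1 :=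
  linearCombination₂_single_one _ a b

theorem intBracket_isAlt : (intBracket R).IsAlt :=
  LinearMap.isAlt_of_basis Finsupp.basisSingleOne
    (fun a => by simp [intBracket_single_one, structConst_self])
    fun a b => by simp [intBracket_single_one, structConst_comm b a, add_comm a]

theorem intBracket_single_one_nested (a b c : ℤ × ℤ) :
    intBracket R (single a 1) (intBracket R (single b 1) (single c 1)) =
      ((structConst b c * structConst a (b + c - (1, 1)) : ℤ) : R) •
        single (a + b + c - (1, 1) - (1, 1)) 1 := by
  rw [intBracket_single_one, map_smul, intBracket_single_one, smul_smul, Int.cast_mul, mul_comm,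
    add_sub_assoc', ← add_assoc]

theorem intBracket_jacobi (x y z : (ℤ × ℤ) →₀ R) :
    intBracket R x (intBracket R y z) + intBracket R y (intBracket R z x) +
      intBracket R z (intBracket R x y) = 0 := by
  refine LinearMap.jacobi_of_basis Finsupp.basisSingleOne (fun a b c => ?_) x y z
  simp only [coe_basisSingleOne, intBracket_single_one_nested]
  rw [show b + c + a = a + b + c by abel, show c + a + b = a + b + c by abel, ← add_smul,
    ← add_smul, ← Int.cast_add, ← Int.cast_add, structConst_jacobi, Int.cast_zero, zero_smul]

variable (R) in
noncomputable def natBracket : ((ℕ × ℕ) →₀ R) →ₗ[R] ((ℕ × ℕ) →₀ R) →ₗ[R] ((ℕ × ℕ) →₀ R) :=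
  linearCombination₂ R fun a b =>
    ((a.2 * b.1 - b.2 * a.1 : ℤ) : R) • single (a.1 + b.1 - 1, a.2 + b.2 - 1) 1

theorem rhpwnBracket_eq_natBracket (x y : (ℕ × ℕ) →₀ ℂ) :
    rhpwnBracket x y = natBracket ℂ x y := by
  simp only [rhpwnBracket, natBracket, linearCombination₂_apply, smul_smul]

def intIndex (a : ℕ × ℕ) : ℤ × ℤ := Prod.map (↑) (↑) a

theorem intIndex_injective : Function.Injective intIndex :=
  Nat.cast_injective.prodMap Nat.cast_injective

theorem intIndex_of_structConst_ne_zero {a b : ℕ × ℕ}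
    (h : structConst (intIndex a) (intIndex b) ≠ 0) :
    intIndex (a.1 + b.1 - 1, a.2 + b.2 - 1) = intIndex a + intIndex b - (1, 1) := by
  simp only [structConst, intIndex, Prod.map_fst, Prod.map_snd] at h
  have h1 : 1 ≤ a.1 + b.1 := by
    by_contra! h0
    obtain ⟨ha, hb⟩ : a.1 = 0 ∧ b.1 = 0 := by omega
    simp [ha, hb] at h
  have h2 : 1 ≤ a.2 + b.2 := by
    by_contra! h0
    obtain ⟨ha, hb⟩ : a.2 = 0 ∧ b.2 = 0 := by omega
    simp [ha, hb] at h
  ext <;> simp [intIndex] <;> omega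

variable (R) in
noncomputable def toIntIndex : ((ℕ × ℕ) →₀ R) →ₗ[R] ((ℤ × ℤ) →₀ R) :=
  lmapDomain R R intIndex

theorem toIntIndex_injective : Function.Injective (toIntIndex R) :=
  mapDomain_injective intIndex_injective

theorem toIntIndex_natBracket (x y : (ℕ × ℕ) →₀ R) :
    toIntIndex R (natBracket R x y) = intBracket R (toIntIndex R x) (toIntIndex R y) := by
  suffices (natBracket R).compr₂ (toIntIndex R) =
      ((intBracket R).comp (toIntIndex R)).compl₂ (toIntIndex R) from congr($this x y)
  refine LinearMap.ext_basis Finsupp.basisSingleOne Finsupp.basisSingleOne fun a b => ?_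
  simp only [LinearMap.compr₂_apply, LinearMap.compl₂_apply, LinearMap.comp_apply,
    coe_basisSingleOne, toIntIndex, lmapDomain_apply, mapDomain_single, natBracket,
    linearCombination₂_single_one, map_smul, intBracket_single_one]
  change ((structConst (intIndex a) (intIndex b) : ℤ) : R) • _ = _
  by_cases h : structConst (intIndex a) (intIndex b) = 0
  · simp [h]
  · rw [intIndex_of_structConst_ne_zero h]

end RHPWN

/-- the RHPWN bracket is alternating and satisfies the Jacobi
identity, hence defines a Lie algebra structure (the RHPWN Lie algebra with
trivial test function algebra). -/
theorem rhpwnBracket_alternating_and_jacobi :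
    (∀ x : (ℕ × ℕ) →₀ ℂ, rhpwnBracket x x = 0) ∧
    (∀ x y z : (ℕ × ℕ) →₀ ℂ,
      rhpwnBracket x (rhpwnBracket y z) + rhpwnBracket y (rhpwnBracket z x) +
        rhpwnBracket z (rhpwnBracket x y) = 0) := by
  open RHPWN in
  refine ⟨fun x => toIntIndex_injective ?_, fun x y z => toIntIndex_injective ?_⟩
  · rw [rhpwnBracket_eq_natBracket, toIntIndex_natBracket, map_zero]
    exact intBracket_isAlt.self_eq_zero _
  · simp only [rhpwnBracket_eq_natBracket, map_add, toIntIndex_natBracket, map_zero]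
    exact intBracket_jacobi _ _ _
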